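/- arXiv:2211.16001 — 2 statements merged into one kernel-verified Lean document; each statement's English description precedes it below -/
import Mathlib

section
/- Looser stopping criterion error bound (eq. (25)): if E(u^{ts}, u^R) ≤ E(u^R, u^C)/10, then E(u^{ts}, u^C)² ≤ (1 + ‖u^R‖²/(100·‖u^C‖²)) · E(u^R, u^C)². -/
open scoped RealInnerProductSpace

/-- Looser stopping criterion error bound (eq. (25)). -/
theorem looser_criterion_error_bound
    {V : Type*} [NormedAddCommGroup V] [InnerProductSpace ℝ V]
    (uts uR uC : V) (hR : uR ≠ 0) (hC : uC ≠ 0)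
    (horth : ⟪uR - uC, uts - uR⟫ = 0)
    (h : ‖uts - uR‖ / ‖uR‖ ≤ (‖uR - uC‖ / ‖uC‖) / 10) :
    (‖uts - uC‖ / ‖uC‖) ^ 2 ≤
      (1 + ‖uR‖ ^ 2 / (100 * ‖uC‖ ^ 2)) * (‖uR - uC‖ / ‖uC‖) ^ 2 := by
  have hRpos : (0:ℝ) < ‖uR‖ := norm_pos_iff.mpr hR
  have hCpos : (0:ℝ) < ‖uC‖ := norm_pos_iff.mpr hC
  have key : ‖uts - uC‖ ^ 2 = ‖uts - uR‖ ^ 2 + ‖uR - uC‖ ^ 2 := by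
    have hd : uts - uC = (uts - uR) + (uR - uC) := by abel
    rw [hd, norm_add_sq_real, real_inner_comm, horth]; ring
  have hb : ‖uts - uR‖ ≤ ‖uR‖ * (‖uR - uC‖ / ‖uC‖) / 10 := by
    have := (div_le_iff₀ hRpos).mp h
    exact this.trans_eq (by ring)
  have hb2 : ‖uts - uR‖ ^ 2 ≤ (‖uR‖ * (‖uR - uC‖ / ‖uC‖) / 10) ^ 2 :=
    pow_le_pow_left₀ (norm_nonneg _) hb 2
  rw [div_pow, div_pow, key]
  rw [div_le_iff₀ (by positivity : (0:ℝ) < ‖uC‖ ^ 2)]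
  have expand : (1 + ‖uR‖ ^ 2 / (100 * ‖uC‖ ^ 2)) * (‖uR - uC‖ ^ 2 / ‖uC‖ ^ 2) * ‖uC‖ ^ 2
      = ‖uR - uC‖ ^ 2 + ‖uR‖ ^ 2 * ‖uR - uC‖ ^ 2 / (100 * ‖uC‖ ^ 2) := by
    field_simp
  rw [expand]
  have : (‖uR‖ * (‖uR - uC‖ / ‖uC‖) / 10) ^ 2
      = ‖uR‖ ^ 2 * ‖uR - uC‖ ^ 2 / (100 * ‖uC‖ ^ 2) := by
    field_simp; ring
  linarith [hb2.trans_eq this]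
end

section
/- Relative accuracy loss bound (eq. (26)): if E(u^{ts}, u^R) ≤ E(u^R, u^C)/10 and u^R ≠ u^C, then (E(u^{ts}, u^C) − E(u^R, u^C)) / E(u^R, u^C) ≤ √(1 + ‖u^R‖²/(100·‖u^C‖²)) − 1. -/
open scoped RealInnerProductSpace

/-- Relative accuracy loss bound (eq. (26)). -/
theorem relative_accuracy_loss_bound
    {V : Type*} [NormedAddCommGroup V] [InnerProductSpace ℝ V]
    (uts uR uC : V) (hR : uR ≠ 0) (hC : uC ≠ 0)
    (horth : ⟪uR - uC, uts - uR⟫ = 0)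
    (h : ‖uts - uR‖ / ‖uR‖ ≤ (‖uR - uC‖ / ‖uC‖) / 10)
    (hne : uR ≠ uC) :
    (‖uts - uC‖ / ‖uC‖ - ‖uR - uC‖ / ‖uC‖) / (‖uR - uC‖ / ‖uC‖) ≤
      Real.sqrt (1 + ‖uR‖ ^ 2 / (100 * ‖uC‖ ^ 2)) - 1 := by
  have hb : 0 < ‖uR - uC‖ := by
    rw [norm_pos_iff, sub_ne_zero]; exact hne
  have hr : 0 < ‖uR‖ := norm_pos_iff.mpr hR
  have hc : 0 < ‖uC‖ := norm_pos_iff.mpr hC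
  set a := ‖uts - uR‖ with ha'
  set b := ‖uR - uC‖ with hb'
  set r := ‖uR‖ with hr'
  set c := ‖uC‖ with hc'
  have ha0 : 0 ≤ a := norm_nonneg _
  have hpyth : ‖uts - uC‖ ^ 2 = a ^ 2 + b ^ 2 := by
    have hi : ⟪uts - uR, uR - uC⟫ = (0 : ℝ) := by
      rw [real_inner_comm]; exact horth
    have hnadd := norm_add_sq_real (uts - uR) (uR - uC)
    rw [hi, sub_add_sub_cancel] at hnadd
    linarith
  have hX : 0 ≤ 1 + r ^ 2 / (100 * c ^ 2) := by positivity
  -- a ≤ b * r / (10 * c)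
  have ha : a ≤ b * r / (10 * c) := by
    have h1 : a ≤ b / c / 10 * r := (div_le_iff₀ hr).mp h
    have h2 : b / c / 10 * r = b * r / (10 * c) := by
      field_simp
    linarith [h2 ▸ h1]
  have ha2 : a ^ 2 ≤ b ^ 2 * r ^ 2 / (100 * c ^ 2) := by
    have h2 : a ^ 2 ≤ (b * r / (10 * c)) ^ 2 := by
      apply pow_le_pow_left₀ ha0 ha
    calc a ^ 2 ≤ (b * r / (10 * c)) ^ 2 := h2
      _ = b ^ 2 * r ^ 2 / (100 * c ^ 2) := by field_simp; ring
  have hkey : ‖uts - uC‖ ≤ b * Real.sqrt (1 + r ^ 2 / (100 * c ^ 2)) := by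
    have h1 : ‖uts - uC‖ = Real.sqrt (a ^ 2 + b ^ 2) := by
      rw [← hpyth, Real.sqrt_sq (norm_nonneg _)]
    have h2 : b * Real.sqrt (1 + r ^ 2 / (100 * c ^ 2))
        = Real.sqrt (b ^ 2 * (1 + r ^ 2 / (100 * c ^ 2))) := by
      rw [Real.sqrt_mul (by positivity) , Real.sqrt_sq hb.le]
    rw [h1, h2]
    apply Real.sqrt_le_sqrt
    have : b ^ 2 * (1 + r ^ 2 / (100 * c ^ 2))
        = b ^ 2 + b ^ 2 * r ^ 2 / (100 * c ^ 2) := by ring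
    rw [this]
    linarith
  rw [div_sub_div_same]
  have heq : (‖uts - uC‖ - b) / c / (b / c) = (‖uts - uC‖ - b) / b := by
    field_simp
  rw [heq, div_le_iff₀ hb]
  have hs : 0 ≤ Real.sqrt (1 + r ^ 2 / (100 * c ^ 2)) := Real.sqrt_nonneg _
  nlinarith [hkey]
end
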